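/- For s ∈ ℝ, the upper incomplete Gamma function Γ(s, y) = ∫_y^∞ z^{s−1} e^{−z} dz satisfies lim_{y→∞} Γ(s, y)/(y^{s−1} e^{−y}) = 1. -/

import Mathlib

/-!
Both `Γ(s, y)` and `y^{s-1} e^{-y}` tend to `0` as `y → ∞`. Their derivatives are
`-y^{s-1} e^{-y}` and `y^{s-1} e^{-y} ((s-1)/y - 1)`, whose quotient `(1 - (s-1)/y)⁻¹` tends
to `1`, so L'Hôpital's rule at infinity gives the limit.
-/

open MeasureTheory Set Filter Real Topology

lemma hasDerivAt_rpow_mul_exp_neg (r : ℝ) {y : ℝ} (hy : y ≠ 0) :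
    HasDerivAt (fun x : ℝ => x ^ r * exp (-x)) (y ^ r * exp (-y) * (r / y - 1)) y := by
  refine ((hasDerivAt_rpow_const (p := r) (Or.inl hy)).mul (hasDerivAt_neg y).exp).congr_deriv ?_
  rw [rpow_sub_one hy]
  ring

lemma integrableOn_rpow_mul_exp_neg_Ioi (r : ℝ) {a : ℝ} (ha : 0 < a) :
    IntegrableOn (fun z : ℝ => z ^ r * exp (-z)) (Ioi a) := by
  refine integrable_of_isBigO_exp_neg one_half_pos ?_ ?_
  · exact fun x hx =>
      (hasDerivAt_rpow_mul_exp_neg r (ha.trans_le hx).ne').continuousAt.continuousWithinAt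
  · simpa only [mul_comm] using (Gamma_integrand_isLittleO r).isBigO

lemma hasDerivAt_integral_Ioi {E : Type*} [NormedAddCommGroup E] [NormedSpace ℝ E]
    [CompleteSpace E] {f : ℝ → E} {a y : ℝ} (hf : IntegrableOn f (Ioi a)) (hay : a < y)
    (hfy : ContinuousAt f y) :
    HasDerivAt (fun x => ∫ z in Ioi x, f z) (-f y) y := by
  have hint : IntervalIntegrable f volume a y :=
    (intervalIntegrable_iff_integrableOn_Ioc_of_le hay.le).2 (hf.mono_set Ioc_subset_Ioi_self)
  have hprim := intervalIntegral.integral_hasDerivAt_right hint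
    ⟨Ioi a, Ioi_mem_nhds hay, hf.aestronglyMeasurable⟩ hfy
  refine (hprim.const_sub (∫ z in Ioi a, f z)).congr_of_eventuallyEq ?_
  filter_upwards [Ioi_mem_nhds hay] with x hx
  rw [← intervalIntegral.integral_Ioi_sub_Ioi hf hx.le, sub_sub_cancel]

/-- Asymptotics of the upper incomplete Gamma function:
`Γ(s, y) = ∫_y^∞ z^{s−1} e^{−z} dz` satisfies `Γ(s, y) / (y^{s−1} e^{−y}) → 1`
as `y → ∞`, for every `s ∈ ℝ`. -/
theorem incomplete_gamma_asymptotics (s : ℝ) :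
    Filter.Tendsto
      (fun y : ℝ =>
        (∫ z in Set.Ioi y, z ^ (s - 1) * Real.exp (-z)) / (y ^ (s - 1) * Real.exp (-y)))
      Filter.atTop (nhds 1) := by
  set f : ℝ → ℝ := fun z => z ^ (s - 1) * exp (-z)
  have hf_pos : ∀ᶠ y in atTop, 0 < f y := by
    filter_upwards [eventually_gt_atTop 0] with y hy
    exact mul_pos (rpow_pos_of_pos hy _) (exp_pos _)
  have hfactor : Tendsto (fun y : ℝ => (s - 1) / y - 1) atTop (𝓝 (-1)) := by
    simpa using ((tendsto_const_nhds (x := s - 1)).div_atTop tendsto_id).sub_const 1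
  refine HasDerivAt.lhopital_zero_atTop (f' := fun y => -f y)
    (g' := fun y => f y * ((s - 1) / y - 1)) ?_ ?_ ?_ (tendsto_integral_Ioi_zero tendsto_id) ?_ ?_
  · filter_upwards [eventually_gt_atTop 1] with y hy
    exact hasDerivAt_integral_Ioi (integrableOn_rpow_mul_exp_neg_Ioi _ one_pos) hy
      (hasDerivAt_rpow_mul_exp_neg _ (by positivity)).continuousAt
  · filter_upwards [eventually_gt_atTop 0] with y hy using hasDerivAt_rpow_mul_exp_neg _ hy.ne'
  · filter_upwards [hf_pos, hfactor.eventually_ne (by norm_num : (-1 : ℝ) ≠ 0)] with y hfy hy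
    exact mul_ne_zero hfy.ne' hy
  · simpa using tendsto_rpow_mul_exp_neg_mul_atTop_nhds_zero (s - 1) 1 one_pos
  · have hlim : Tendsto (fun y : ℝ => (-((s - 1) / y - 1))⁻¹) atTop (𝓝 1) := by
      simpa using hfactor.neg.inv₀ (by norm_num)
    refine hlim.congr' ?_
    filter_upwards [hf_pos] with y hfy
    rw [neg_div, div_mul_cancel_left₀ hfy.ne', inv_neg]
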